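/- Let T_n(q,t) = Σ_{P Dyck path of length 2n} q^{a(P)} t^{b(P)} (with T_0 = 1), and let C(x) = Σ_{n≥0} C_n x^n be the generating function of the Catalan numbers C_n = (1/(n+1))·binomial(2n, n). Then, as formal power series in x with coefficients in ℚ[q,t], (1 − qt·x + (qt − q − t)·x·C(x)) · Σ_{n≥0} T_n(q,t) x^n = 1 + (qt − q − t)·x·C(x). -/

import Mathlib

/-- Height of the path with up-step set `A` after `x` steps: `2·|A ∩ {1,…,x}| − x`. -/
def ht (A : Finset ℕ) (x : ℕ) : ℤ := 2 * (A ∩ Finset.Icc 1 x).card - x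

/-- `P` is the up-step set of a Dyck path of length `2n`. -/
def IsDyck (n : ℕ) (P : Finset ℕ) : Prop :=
  P ⊆ Finset.Icc 1 (2 * n) ∧ P.card = n ∧ ∀ x ≤ 2 * n, 0 ≤ ht P x

open MvPolynomial

/-- `a(P)`: the number of up-steps `P` takes before its first down-step, i.e. the
largest `k ≥ 0` with `{1,…,k} ⊆ P`. -/
noncomputable def statA (P : Finset ℕ) : ℕ :=
  sSup {k : ℕ | Finset.Icc 1 k ⊆ P}

/-- `b(P)`: the number of `x ∈ {1,…,2n}` with `ht_P(x) = 0`. -/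
def statB (n : ℕ) (P : Finset ℕ) : ℕ :=
  ((Finset.Icc 1 (2 * n)).filter (fun x => ht P x = 0)).card

open scoped Classical in
/-- `T_n(q,t) = Σ_{P Dyck of length 2n} q^{a(P)} t^{b(P)}` (so `T_0 = 1`),
as a polynomial in `q = X 0` and `t = X 1`. -/
noncomputable def T (n : ℕ) : MvPolynomial (Fin 2) ℚ :=
  ∑ P ∈ (Finset.Icc 1 (2 * n)).powerset.filter (IsDyck n),
    (X 0 : MvPolynomial (Fin 2) ℚ) ^ statA P * X 1 ^ statB n P

/-- The generating function `C(x) = Σ_{n ≥ 0} C_n x^n` of the Catalan numbers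
`C_n = (1/(n+1))·binomial(2n,n)`, as a power series with coefficients in `ℚ[q,t]`. -/
noncomputable def catalanGF : PowerSeries (MvPolynomial (Fin 2) ℚ) :=
  PowerSeries.mk fun n => MvPolynomial.C (((2 * n).choose n : ℚ) / (n + 1))


open Finset

open scoped Classical in
noncomputable def dyckSet (n : ℕ) : Finset (Finset ℕ) :=
  (Finset.Icc 1 (2 * n)).powerset.filter (IsDyck n)

lemma mem_dyckSet {n : ℕ} {P : Finset ℕ} : P ∈ dyckSet n ↔ IsDyck n P := by
  classical
  simp only [dyckSet, mem_filter, mem_powerset]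
  exact ⟨fun h => h.2, fun h => ⟨h.1, h⟩⟩

lemma ht_zero (A : Finset ℕ) : ht A 0 = 0 := by simp [ht]

lemma card_inter_Icc_succ (A : Finset ℕ) (x : ℕ) :
    (A ∩ Finset.Icc 1 (x+1)).card
      = (A ∩ Finset.Icc 1 x).card + (if x+1 ∈ A then 1 else 0) := by
  classical
  have h : Finset.Icc 1 (x+1) = insert (x+1) (Finset.Icc 1 x) := by
    ext y; simp [Finset.mem_Icc, Finset.mem_insert]; omega
  rw [h]
  by_cases hx : x + 1 ∈ A
  · have : A ∩ insert (x+1) (Finset.Icc 1 x) = insert (x+1) (A ∩ Finset.Icc 1 x) := by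
      ext y; simp [Finset.mem_inter, Finset.mem_insert]
      constructor
      · rintro ⟨h1, h2 | h2⟩
        · exact Or.inl h2
        · exact Or.inr ⟨h1, h2⟩
      · rintro (rfl | ⟨h1, h2⟩)
        · exact ⟨hx, Or.inl rfl⟩
        · exact ⟨h1, Or.inr h2⟩
    rw [this, Finset.card_insert_of_notMem (by simp [Finset.mem_Icc])]
    simp [hx]
  · have : A ∩ insert (x+1) (Finset.Icc 1 x) = A ∩ Finset.Icc 1 x := by
      ext y; simp only [Finset.mem_inter, Finset.mem_insert]
      constructor
      · rintro ⟨h1, rfl | h2⟩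
        · exact absurd h1 hx
        · exact ⟨h1, h2⟩
      · rintro ⟨h1, h2⟩; exact ⟨h1, Or.inr h2⟩
    rw [this]; simp [hx]

lemma ht_succ (A : Finset ℕ) (x : ℕ) :
    ht A (x+1) = ht A x + (if x+1 ∈ A then 1 else -1) := by
  simp only [ht, card_inter_Icc_succ]
  by_cases hx : x + 1 ∈ A <;> simp [hx] <;> push_cast <;> ring


section Glue
variable {k m : ℕ} {P' Q : Finset ℕ}

def glueP (k : ℕ) (P' Q : Finset ℕ) : Finset ℕ :=
  insert 1 (P'.image (· + 1) ∪ Q.image (· + (2 * k + 2)))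


lemma glue_inter (hP : P' ⊆ Finset.Icc 1 (2*k)) (hQ : ∀ q ∈ Q, 1 ≤ q) (x : ℕ) :
    ((glueP k P' Q) ∩ Finset.Icc 1 x).card
      = (if 1 ≤ x then 1 else 0) + (P' ∩ Finset.Icc 1 (x-1)).card
        + (Q ∩ Finset.Icc 1 (x - (2*k+2))).card := by
  classical
  have hP1 : ∀ p ∈ P', 1 ≤ p ∧ p ≤ 2*k := fun p hp => by
    have := hP hp; simp [Finset.mem_Icc] at this; exact this
  have e1 : (glueP k P' Q) ∩ Finset.Icc 1 x
      = ({1} ∩ Finset.Icc 1 x) ∪ (((P'.image (· + 1)) ∩ Finset.Icc 1 x)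
        ∪ ((Q.image (· + (2*k+2))) ∩ Finset.Icc 1 x)) := by
    simp only [glueP, insert_eq, Finset.union_inter_distrib_right]
  have d1 : Disjoint (({1} : Finset ℕ) ∩ Finset.Icc 1 x)
      (((P'.image (· + 1)) ∩ Finset.Icc 1 x) ∪ ((Q.image (· + (2*k+2))) ∩ Finset.Icc 1 x)) := by
    simp only [Finset.disjoint_left]
    intro a ha hb
    simp only [Finset.mem_inter, Finset.mem_singleton] at ha
    rcases ha with ⟨rfl, -⟩
    simp only [Finset.mem_union, Finset.mem_inter, Finset.mem_image] at hb
    rcases hb with ⟨⟨p, hp, hpe⟩, -⟩ | ⟨⟨q, hq, hqe⟩, -⟩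
    · have := (hP1 p hp).1; omega
    · have := hQ q hq; omega
  have d2 : Disjoint ((P'.image (· + 1)) ∩ Finset.Icc 1 x)
      ((Q.image (· + (2*k+2))) ∩ Finset.Icc 1 x) := by
    simp only [Finset.disjoint_left]
    intro a ha hb
    simp only [Finset.mem_inter, Finset.mem_image] at ha hb
    rcases ha with ⟨⟨p, hp, hpe⟩, -⟩
    rcases hb with ⟨⟨q, hq, hqe⟩, -⟩
    have := (hP1 p hp).2; have := hQ q hq; omega
  have c1 : (({1} : Finset ℕ) ∩ Finset.Icc 1 x).card = if 1 ≤ x then 1 else 0 := by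
    by_cases hx : 1 ≤ x
    · have : ({1} : Finset ℕ) ∩ Finset.Icc 1 x = {1} := by
        ext y; simp [Finset.mem_Icc]; omega
      simp [this, hx]
    · have : ({1} : Finset ℕ) ∩ Finset.Icc 1 x = ∅ := by
        ext y; simp [Finset.mem_Icc]; omega
      simp [this, hx]
  have c2 : ((P'.image (· + 1)) ∩ Finset.Icc 1 x)
      = (P' ∩ Finset.Icc 1 (x-1)).image (· + 1) := by
    ext y
    simp only [Finset.mem_inter, Finset.mem_image, Finset.mem_Icc]
    constructor
    · rintro ⟨⟨p, hp, rfl⟩, h1, h2⟩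
      exact ⟨p, ⟨hp, (hP1 p hp).1, by omega⟩, rfl⟩
    · rintro ⟨p, ⟨hp, h1, h2⟩, rfl⟩
      exact ⟨⟨p, hp, rfl⟩, by omega, by omega⟩
  have c3 : ((Q.image (· + (2*k+2))) ∩ Finset.Icc 1 x)
      = (Q ∩ Finset.Icc 1 (x - (2*k+2))).image (· + (2*k+2)) := by
    ext y
    simp only [Finset.mem_inter, Finset.mem_image, Finset.mem_Icc]
    constructor
    · rintro ⟨⟨q, hq, rfl⟩, h1, h2⟩
      exact ⟨q, ⟨hq, hQ q hq, by omega⟩, rfl⟩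
    · rintro ⟨q, ⟨hq, h1, h2⟩, rfl⟩
      exact ⟨⟨q, hq, rfl⟩, by omega, by omega⟩
  rw [e1, Finset.card_union_of_disjoint d1, Finset.card_union_of_disjoint d2, c1, c2, c3,
    Finset.card_image_of_injective _ (add_left_injective 1),
    Finset.card_image_of_injective _ (add_left_injective (2*k+2))]
  ring

lemma ht_glue_left (hP : P' ⊆ Finset.Icc 1 (2*k)) (hQ : ∀ q ∈ Q, 1 ≤ q)
    {x : ℕ} (hx1 : 1 ≤ x) (hx2 : x ≤ 2*k+2) :
    ht (glueP k P' Q) x = 1 + ht P' (x - 1) := by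
  have h := glue_inter hP hQ x
  have h0 : x - (2*k+2) = 0 := by omega
  rw [h0] at h
  have : (Q ∩ Finset.Icc 1 0).card = 0 := by simp
  rw [this] at h
  simp only [ht, h, hx1, if_pos]
  have : ((x : ℤ)) = ((x - 1 : ℕ) : ℤ) + 1 := by omega
  push_cast
  omega

lemma ht_glue_right (hP : P' ⊆ Finset.Icc 1 (2*k)) (hQ : ∀ q ∈ Q, 1 ≤ q)
    (hcard : P'.card = k) {x : ℕ} (hx : 2*k+2 ≤ x) :
    ht (glueP k P' Q) x = ht Q (x - (2*k+2)) := by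
  have h := glue_inter hP hQ x
  have hfull : P' ∩ Finset.Icc 1 (x-1) = P' := by
    apply Finset.inter_eq_left.mpr
    intro p hp
    have := hP hp; simp [Finset.mem_Icc] at this ⊢; omega
  rw [hfull, hcard] at h
  simp only [ht, h, if_pos (by omega : 1 ≤ x)]
  have : ((x : ℤ)) = ((x - (2*k+2) : ℕ) : ℤ) + (2*k+2) := by
    push_cast; omega
  push_cast
  omega

end Glue

section Glue2
variable {k m : ℕ} {P' Q : Finset ℕ}

lemma isDyck_mem_ge_one {n : ℕ} (h : IsDyck n Q) : ∀ q ∈ Q, 1 ≤ q := by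
  intro q hq
  have := h.1 hq
  simp [Finset.mem_Icc] at this
  exact this.1

lemma ht_full {n : ℕ} (h : IsDyck n Q) : ht Q (2*n) = 0 := by
  have : Q ∩ Finset.Icc 1 (2*n) = Q := Finset.inter_eq_left.mpr h.1
  simp [ht, this, h.2.1]

lemma isDyck_glue (hP' : IsDyck k P') (hQ : IsDyck m Q) :
    IsDyck (k + m + 1) (glueP k P' Q) := by
  obtain ⟨hs1, hc1, hh1⟩ := hP'
  obtain ⟨hs2, hc2, hh2⟩ := hQ
  have hQ1 := isDyck_mem_ge_one ⟨hs2, hc2, hh2⟩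
  refine ⟨?_, ?_, ?_⟩
  · intro z hz
    simp only [glueP, Finset.mem_insert, Finset.mem_union, Finset.mem_image] at hz
    simp only [Finset.mem_Icc]
    rcases hz with rfl | ⟨p, hp, rfl⟩ | ⟨q, hq, rfl⟩
    · omega
    · have := hs1 hp; simp [Finset.mem_Icc] at this; omega
    · have := hs2 hq; simp [Finset.mem_Icc] at this; omega
  · have h := glue_inter hs1 hQ1 (2*(k+m+1))
    have e1 : glueP k P' Q ∩ Finset.Icc 1 (2*(k+m+1)) = glueP k P' Q := by
      apply Finset.inter_eq_left.mpr
      intro z hz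
      simp only [glueP, Finset.mem_insert, Finset.mem_union, Finset.mem_image] at hz
      simp only [Finset.mem_Icc]
      rcases hz with rfl | ⟨p, hp, rfl⟩ | ⟨q, hq, rfl⟩
      · omega
      · have := hs1 hp; simp [Finset.mem_Icc] at this; omega
      · have := hs2 hq; simp [Finset.mem_Icc] at this; omega
    have e2 : P' ∩ Finset.Icc 1 (2*(k+m+1) - 1) = P' := by
      apply Finset.inter_eq_left.mpr
      intro p hp; have := hs1 hp; simp [Finset.mem_Icc] at this ⊢; omega
    have e3 : Q ∩ Finset.Icc 1 (2*(k+m+1) - (2*k+2)) = Q := by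
      apply Finset.inter_eq_left.mpr
      intro q hq; have := hs2 hq; simp [Finset.mem_Icc] at this ⊢; omega
    rw [e1, e2, e3] at h
    rw [h, hc1, hc2]
    simp only [if_pos (by omega : 1 ≤ 2*(k+m+1))]
    omega
  · intro x hx
    rcases Nat.eq_zero_or_pos x with rfl | hx0
    · simp [ht_zero]
    by_cases hxk : x ≤ 2*k+1
    · rw [ht_glue_left hs1 hQ1 hx0 (by omega)]
      have := hh1 (x-1) (by omega)
      omega
    · rw [ht_glue_right hs1 hQ1 hc1 (by omega)]
      exact hh2 _ (by omega)

lemma statA_bdd {P : Finset ℕ} : BddAbove {k : ℕ | Finset.Icc 1 k ⊆ P} := by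
  refine ⟨P.card, fun j hj => ?_⟩
  have := Finset.card_le_card hj
  simpa [Nat.card_Icc] using this

lemma statA_spec (P : Finset ℕ) : Finset.Icc 1 (statA P) ⊆ P :=
  Nat.sSup_mem ⟨0, by simp⟩ statA_bdd

lemma statA_le_card (P : Finset ℕ) : statA P ≤ P.card := by
  have := Finset.card_le_card (statA_spec P)
  simpa [Nat.card_Icc] using this

lemma statA_eq_of {P : Finset ℕ} {a : ℕ} (h1 : Finset.Icc 1 a ⊆ P) (h2 : a + 1 ∉ P) :
    statA P = a := by
  apply le_antisymm
  · apply csSup_le ⟨0, by simp⟩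
    intro b hb
    by_contra hba
    push_neg at hba
    exact h2 (hb (by simp [Finset.mem_Icc]; omega))
  · exact le_csSup statA_bdd h1

lemma statA_empty : statA (∅ : Finset ℕ) = 0 :=
  statA_eq_of (by simp) (by simp)

lemma statA_glue (hP' : IsDyck k P') (hQ : IsDyck m Q) :
    statA (glueP k P' Q) = statA P' + 1 := by
  have hQ1 := isDyck_mem_ge_one hQ
  apply statA_eq_of
  · intro j hj
    simp only [Finset.mem_Icc] at hj
    rcases Nat.eq_or_lt_of_le hj.1 with h1 | h1
    · simp [glueP, ← h1]
    · have : j - 1 ∈ P' := statA_spec P' (by simp [Finset.mem_Icc]; omega)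
      simp only [glueP, Finset.mem_insert, Finset.mem_union, Finset.mem_image]
      right; left
      exact ⟨j - 1, this, by omega⟩
  · intro hmem
    simp only [glueP, Finset.mem_insert, Finset.mem_union, Finset.mem_image] at hmem
    rcases hmem with h | ⟨p, hp, hpe⟩ | ⟨q, hq, hqe⟩
    · omega
    · have hpv : p = statA P' + 1 := by omega
      subst hpv
      have : Finset.Icc 1 (statA P' + 1) ⊆ P' := by
        intro j hj
        simp only [Finset.mem_Icc] at hj
        rcases Nat.eq_or_lt_of_le hj.2 with h1 | h1
        · rwa [h1]
        · exact statA_spec P' (by simp [Finset.mem_Icc]; omega)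
      have := le_csSup (statA_bdd (P := P')) this
      have : statA P' + 1 ≤ statA P' := this
      omega
    · have := hQ1 q hq
      have h1 : statA P' ≤ P'.card := statA_le_card P'
      rw [hP'.2.1] at h1
      omega

lemma statB_glue (hP' : IsDyck k P') (hQ : IsDyck m Q) :
    statB (k + m + 1) (glueP k P' Q) = statB m Q + 1 := by
  classical
  have hQ1 := isDyck_mem_ge_one hQ
  have key : (Finset.Icc 1 (2*(k+m+1))).filter (fun x => ht (glueP k P' Q) x = 0)
      = insert (2*k+2)
          (((Finset.Icc 1 (2*m)).filter (fun y => ht Q y = 0)).image (· + (2*k+2))) := by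
    ext z
    simp only [Finset.mem_filter, Finset.mem_Icc, Finset.mem_insert, Finset.mem_image]
    constructor
    · rintro ⟨⟨hz1, hz2⟩, hz0⟩
      by_cases hzk : z ≤ 2*k+1
      · exfalso
        rw [ht_glue_left hP'.1 hQ1 hz1 (by omega)] at hz0
        have := hP'.2.2 (z-1) (by omega)
        omega
      · rcases Nat.eq_or_lt_of_le (by omega : 2*k+2 ≤ z) with h1 | h1
        · exact Or.inl h1.symm
        · right
          refine ⟨z - (2*k+2), ⟨⟨by omega, by omega⟩, ?_⟩, by omega⟩
          rw [ht_glue_right hP'.1 hQ1 hP'.2.1 (by omega)] at hz0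
          exact hz0
    · rintro (rfl | ⟨y, ⟨⟨hy1, hy2⟩, hy0⟩, rfl⟩)
      · refine ⟨⟨by omega, by omega⟩, ?_⟩
        rw [ht_glue_right hP'.1 hQ1 hP'.2.1 (le_refl _)]
        simp [ht_zero]
      · refine ⟨⟨by omega, by omega⟩, ?_⟩
        rw [ht_glue_right hP'.1 hQ1 hP'.2.1 (by omega)]
        have : y + (2*k+2) - (2*k+2) = y := by omega
        rw [this]
        exact hy0
  rw [statB, key, Finset.card_insert_of_notMem, Finset.card_image_of_injective _
    (add_left_injective (2*k+2))]
  · rfl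
  · intro hmem
    simp only [Finset.mem_image, Finset.mem_filter, Finset.mem_Icc] at hmem
    obtain ⟨y, ⟨⟨hy1, _⟩, _⟩, hye⟩ := hmem
    omega

end Glue2
noncomputable def fret (P : Finset ℕ) : ℕ := sInf {x | 0 < x ∧ ht P x = 0}

noncomputable def kOf (P : Finset ℕ) : ℕ := fret P / 2 - 1

def leftPart (k : ℕ) (P : Finset ℕ) : Finset ℕ :=
  (P ∩ Finset.Icc 2 (2*k+1)).image (· - 1)

def rightPart (k : ℕ) (P : Finset ℕ) : Finset ℕ :=
  (P.filter (fun x => 2*k+2 < x)).image (· - (2*k+2))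

section Split
variable {n : ℕ} {P : Finset ℕ}

lemma fret_spec (hP : IsDyck (n+1) P) :
    0 < fret P ∧ ht P (fret P) = 0 ∧ fret P ≤ 2*(n+1) ∧
      ∀ x, 0 < x → x < fret P → ht P x ≠ 0 := by
  have h2n : (2*(n+1)) ∈ {x | 0 < x ∧ ht P x = 0} := ⟨by omega, ht_full hP⟩
  have hmem := Nat.sInf_mem ⟨_, h2n⟩
  refine ⟨hmem.1, hmem.2, Nat.sInf_le h2n, fun x hx hlt h => ?_⟩
  have hx2 : x ∈ {x | 0 < x ∧ ht P x = 0} := ⟨hx, h⟩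
  have : fret P ≤ x := Nat.sInf_le hx2
  omega

lemma fret_eq (hP : IsDyck (n+1) P) : fret P = 2 * kOf P + 2 := by
  obtain ⟨h1, h2, h3, h4⟩ := fret_spec hP
  have heven : 2 ∣ fret P := by
    have : (fret P : ℤ) = 2 * (P ∩ Finset.Icc 1 (fret P)).card := by
      simp [ht] at h2; omega
    omega
  have hne1 : fret P ≠ 0 := by omega
  simp only [kOf]
  omega

lemma kOf_le (hP : IsDyck (n+1) P) : kOf P ≤ n := by
  have := (fret_spec hP).2.2.1
  have := fret_eq hP
  omega

lemma ht_pos_of_lt_fret (hP : IsDyck (n+1) P) {x : ℕ} (h1 : 1 ≤ x) (h2 : x ≤ 2 * kOf P + 1) :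
    1 ≤ ht P x := by
  have hf := fret_spec hP
  have he := fret_eq hP
  have := hf.2.2.2 x (by omega) (by omega)
  have := hP.2.2 x (by have := kOf_le hP; omega)
  omega

lemma one_mem_dyck (hP : IsDyck (n+1) P) : 1 ∈ P := by
  have h := ht_pos_of_lt_fret hP (le_refl 1) (by omega)
  by_contra h1
  rw [show (1:ℕ) = 0 + 1 from rfl, ht_succ, if_neg h1, ht_zero] at h
  omega

lemma fret_not_mem (hP : IsDyck (n+1) P) : 2 * kOf P + 2 ∉ P := by
  intro hmem
  have h2 : ht P (2 * kOf P + 2) = 0 := by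
    rw [← fret_eq hP]; exact (fret_spec hP).2.1
  have h1 : 1 ≤ ht P (2 * kOf P + 1) := ht_pos_of_lt_fret hP (by omega) (by omega)
  have hs := ht_succ P (2 * kOf P + 1)
  rw [show 2 * kOf P + 1 + 1 = 2 * kOf P + 2 by omega, if_pos hmem] at hs
  omega

lemma glue_split (hP : IsDyck (n+1) P) :
    glueP (kOf P) (leftPart (kOf P) P) (rightPart (kOf P) P) = P := by
  have h1 := one_mem_dyck hP
  have h2 := fret_not_mem hP
  ext z
  simp only [glueP, leftPart, rightPart, Finset.mem_insert, Finset.mem_union,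
    Finset.mem_image, Finset.mem_inter, Finset.mem_Icc, Finset.mem_filter]
  constructor
  · rintro (rfl | ⟨a, ⟨b, ⟨⟨hb, h2b, h3b⟩, rfl⟩⟩, rfl⟩ | ⟨a, ⟨b, ⟨⟨hb, h2b⟩, rfl⟩⟩, rfl⟩)
    · exact h1
    · have : b - 1 + 1 = b := by omega
      rwa [this]
    · have : b - (2 * kOf P + 2) + (2 * kOf P + 2) = b := by omega
      rwa [this]
  · intro hz
    have hz1 : 1 ≤ z := by
      have := hP.1 hz; simp [Finset.mem_Icc] at this; exact this.1
    rcases Nat.eq_or_lt_of_le hz1 with h | h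
    · exact Or.inl h.symm
    by_cases hzk : z ≤ 2 * kOf P + 1
    · exact Or.inr (Or.inl ⟨z - 1, ⟨z, ⟨hz, by omega, hzk⟩, rfl⟩, by omega⟩)
    · have hzne : z ≠ 2 * kOf P + 2 := fun he => h2 (he ▸ hz)
      exact Or.inr (Or.inr ⟨z - (2 * kOf P + 2), ⟨z, ⟨hz, by omega⟩, rfl⟩, by omega⟩)

lemma leftPart_subset {k : ℕ} : leftPart k P ⊆ Finset.Icc 1 (2*k) := by
  intro a ha
  simp only [leftPart, Finset.mem_image, Finset.mem_inter, Finset.mem_Icc] at ha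
  obtain ⟨b, ⟨_, h2, h3⟩, rfl⟩ := ha
  simp [Finset.mem_Icc]; omega

lemma rightPart_ge_one {k : ℕ} : ∀ q ∈ rightPart k P, 1 ≤ q := by
  intro q hq
  simp only [rightPart, Finset.mem_image, Finset.mem_filter] at hq
  obtain ⟨b, ⟨_, h2⟩, rfl⟩ := hq
  omega

lemma split_isDyck (hP : IsDyck (n+1) P) :
    IsDyck (kOf P) (leftPart (kOf P) P) ∧ IsDyck (n - kOf P) (rightPart (kOf P) P) := by
  set k := kOf P with hk
  have hkn := kOf_le hP
  have hglue := glue_split hP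
  have hint : ∀ x, (P ∩ Finset.Icc 1 x).card
      = (if 1 ≤ x then 1 else 0) + (leftPart k P ∩ Finset.Icc 1 (x-1)).card
        + (rightPart k P ∩ Finset.Icc 1 (x - (2*k+2))).card := by
    intro x
    conv_lhs => rw [← hglue]
    exact glue_inter leftPart_subset rightPart_ge_one x
  -- card of leftPart
  have hret : ht P (2*k+2) = 0 := by rw [← fret_eq hP]; exact (fret_spec hP).2.1
  have hcardL : (leftPart k P).card = k := by
    have h := hint (2*k+2)
    have e2 : leftPart k P ∩ Finset.Icc 1 (2*k+2-1) = leftPart k P := by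
      apply Finset.inter_eq_left.mpr
      intro p hp; have := leftPart_subset hp; simp [Finset.mem_Icc] at this ⊢; omega
    have e3 : rightPart k P ∩ Finset.Icc 1 (2*k+2 - (2*k+2)) = ∅ := by
      apply Finset.eq_empty_of_forall_notMem
      intro q hq
      have := (Finset.mem_inter.mp hq).2
      simp only [Finset.mem_Icc] at this
      omega
    rw [e2, e3] at h
    simp only [ht] at hret
    rw [h] at hret
    simp at hret
    omega
  have hLD : IsDyck k (leftPart k P) := by
    refine ⟨leftPart_subset, hcardL, ?_⟩
    intro y hy
    rcases Nat.eq_zero_or_pos y with rfl | hy0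
    · simp [ht_zero]
    have hgl : ht P (y+1) = 1 + ht (leftPart k P) y := by
      conv_lhs => rw [← hglue]
      have := ht_glue_left (P' := leftPart k P) (Q := rightPart k P)
        leftPart_subset rightPart_ge_one (by omega : 1 ≤ y+1) (by omega : y+1 ≤ 2*k+2)
      simpa using this
    have := ht_pos_of_lt_fret hP (by omega : 1 ≤ y+1) (by omega)
    omega
  refine ⟨hLD, ?_, ?_, ?_⟩
  · intro q hq
    simp only [rightPart, Finset.mem_image, Finset.mem_filter] at hq
    obtain ⟨b, ⟨hb, h2⟩, rfl⟩ := hq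
    have := hP.1 hb
    simp [Finset.mem_Icc] at this ⊢
    omega
  · have h := hint (2*(n+1))
    have e1 : P ∩ Finset.Icc 1 (2*(n+1)) = P := Finset.inter_eq_left.mpr hP.1
    have e2 : leftPart k P ∩ Finset.Icc 1 (2*(n+1)-1) = leftPart k P := by
      apply Finset.inter_eq_left.mpr
      intro p hp; have := leftPart_subset hp; simp [Finset.mem_Icc] at this ⊢; omega
    have e3 : rightPart k P ∩ Finset.Icc 1 (2*(n+1) - (2*k+2)) = rightPart k P := by
      apply Finset.inter_eq_left.mpr
      intro q hq
      have h1 := rightPart_ge_one q hq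
      simp only [rightPart, Finset.mem_image, Finset.mem_filter] at hq
      obtain ⟨b, ⟨hb, hb2⟩, rfl⟩ := hq
      have := hP.1 hb
      simp [Finset.mem_Icc] at this ⊢
      omega
    rw [e1, e2, e3, hP.2.1, hcardL] at h
    simp only [if_pos (by omega : 1 ≤ 2*(n+1))] at h
    omega
  · intro y hy
    have hgr : ht P (2*k+2+y) = ht (rightPart k P) y := by
      conv_lhs => rw [← hglue]
      have := ht_glue_right (P' := leftPart k P) (Q := rightPart k P)
        leftPart_subset rightPart_ge_one hcardL (by omega : 2*k+2 ≤ 2*k+2+y)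
      simpa using this
    have := hP.2.2 (2*k+2+y) (by omega)
    omega

lemma kOf_glue {k m : ℕ} {P' Q : Finset ℕ} (hP' : IsDyck k P') (hQ : IsDyck m Q) :
    kOf (glueP k P' Q) = k := by
  have hQ1 := isDyck_mem_ge_one hQ
  have hmem : (2*k+2) ∈ {x | 0 < x ∧ ht (glueP k P' Q) x = 0} := by
    refine ⟨by omega, ?_⟩
    rw [ht_glue_right hP'.1 hQ1 hP'.2.1 (le_refl _)]
    simp [ht_zero]
  have hle : fret (glueP k P' Q) ≤ 2*k+2 := Nat.sInf_le hmem
  have hge : 2*k+2 ≤ fret (glueP k P' Q) := by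
    by_contra hlt
    push_neg at hlt
    have hmem2 : 0 < fret (glueP k P' Q) ∧ ht (glueP k P' Q) (fret (glueP k P' Q)) = 0 :=
      Nat.sInf_mem (⟨_, hmem⟩ : {x | 0 < x ∧ ht (glueP k P' Q) x = 0}.Nonempty)
    obtain ⟨hpos, hzero⟩ := hmem2
    rw [ht_glue_left hP'.1 hQ1 hpos (by omega)] at hzero
    have := hP'.2.2 (fret (glueP k P' Q) - 1) (by omega)
    omega
  have : fret (glueP k P' Q) = 2*k+2 := by omega
  simp only [kOf, this]
  omega

lemma leftPart_glue {k m : ℕ} {P' Q : Finset ℕ} (hP' : IsDyck k P') (hQ : IsDyck m Q) :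
    leftPart k (glueP k P' Q) = P' := by
  have hQ1 := isDyck_mem_ge_one hQ
  ext p
  simp only [leftPart, glueP, Finset.mem_image, Finset.mem_inter, Finset.mem_insert,
    Finset.mem_union, Finset.mem_Icc]
  constructor
  · rintro ⟨b, ⟨hb | ⟨⟨a, ha, rfl⟩ | ⟨a, ha, rfl⟩⟩, h2, h3⟩, rfl⟩
    · omega
    · have : a + 1 - 1 = a := by omega
      rwa [this]
    · have := hQ1 a ha; omega
  · intro hp
    have hple : 1 ≤ p ∧ p ≤ 2*k := by
      have := hP'.1 hp; simpa [Finset.mem_Icc] using this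
    exact ⟨p + 1, ⟨Or.inr (Or.inl ⟨p, hp, rfl⟩), by omega, by omega⟩, by omega⟩

lemma rightPart_glue {k m : ℕ} {P' Q : Finset ℕ} (hP' : IsDyck k P') (hQ : IsDyck m Q) :
    rightPart k (glueP k P' Q) = Q := by
  have hQ1 := isDyck_mem_ge_one hQ
  ext q
  simp only [rightPart, glueP, Finset.mem_image, Finset.mem_filter, Finset.mem_insert,
    Finset.mem_union]
  constructor
  · rintro ⟨b, ⟨hb | ⟨⟨a, ha, rfl⟩ | ⟨a, ha, rfl⟩⟩, h2⟩, rfl⟩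
    · omega
    · have := hP'.1 ha; simp [Finset.mem_Icc] at this; omega
    · have : a + (2*k+2) - (2*k+2) = a := by omega
      rwa [this]
  · intro hq
    exact ⟨q + (2*k+2), ⟨Or.inr (Or.inr ⟨q, hq, rfl⟩), by have := hQ1 q hq; omega⟩, by omega⟩

end Split
lemma sum_dyck_succ {M : Type*} [AddCommMonoid M] (n : ℕ) (f : Finset ℕ → M) :
    ∑ P ∈ dyckSet (n+1), f P
      = ∑ k ∈ Finset.range (n+1), ∑ P' ∈ dyckSet k, ∑ Q ∈ dyckSet (n-k), f (glueP k P' Q) := by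
  classical
  have hrhs : ∑ x ∈ (Finset.range (n+1)).sigma (fun k => dyckSet k ×ˢ dyckSet (n-k)),
          f (glueP x.1 x.2.1 x.2.2)
      = ∑ k ∈ Finset.range (n+1), ∑ P' ∈ dyckSet k, ∑ Q ∈ dyckSet (n-k), f (glueP k P' Q) := by
    rw [Finset.sum_sigma]
    exact Finset.sum_congr rfl fun k _ => Finset.sum_product _ _ _
  rw [← hrhs]
  refine Finset.sum_nbij'
    (i := fun P => ⟨kOf P, (leftPart (kOf P) P, rightPart (kOf P) P)⟩)
    (j := fun x => glueP x.1 x.2.1 x.2.2) ?_ ?_ ?_ ?_ ?_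
  · intro P hP
    rw [mem_dyckSet] at hP
    simp only [Finset.mem_sigma, Finset.mem_range, Finset.mem_product]
    obtain ⟨hL, hR⟩ := split_isDyck hP
    exact ⟨by have := kOf_le hP; omega, mem_dyckSet.mpr hL, mem_dyckSet.mpr hR⟩
  · rintro ⟨k, P', Q⟩ hx
    simp only [Finset.mem_sigma, Finset.mem_range, Finset.mem_product] at hx
    obtain ⟨hk, hP', hQ⟩ := hx
    rw [mem_dyckSet] at hP' hQ ⊢
    have := isDyck_glue hP' hQ
    rwa [show k + (n - k) + 1 = n + 1 by omega] at this
  · intro P hP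
    exact glue_split (mem_dyckSet.mp hP)
  · rintro ⟨k, P', Q⟩ hx
    simp only [Finset.mem_sigma, Finset.mem_range, Finset.mem_product, mem_dyckSet] at hx
    obtain ⟨hk, hP', hQ⟩ := hx
    have h1 := kOf_glue hP' hQ
    have h2 := leftPart_glue hP' hQ
    have h3 := rightPart_glue hP' hQ
    dsimp only
    rw [h1, h2, h3]
  · intro P hP
    exact congrArg f (glue_split (mem_dyckSet.mp hP)).symm

lemma dyckSet_zero : dyckSet 0 = {∅} := by
  ext P
  rw [mem_dyckSet, Finset.mem_singleton]
  constructor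
  · intro h
    have := h.1
    simpa [Finset.subset_empty] using this
  · rintro rfl
    exact ⟨by simp, by simp, by intro x hx; interval_cases x; simp [ht_zero]⟩

lemma card_dyckSet : ∀ n, (dyckSet n).card = catalan n := by
  intro n
  induction n using Nat.strong_induction_on with
  | _ n ih =>
    match n with
    | 0 => simp [dyckSet_zero]
    | n + 1 =>
      have h := sum_dyck_succ n (fun _ => (1 : ℕ))
      simp only [Finset.sum_const, smul_eq_mul, mul_one] at h
      rw [h, catalan_succ', Finset.Nat.sum_antidiagonal_eq_sum_range_succ_mk]
      refine Finset.sum_congr rfl fun k hk => ?_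
      simp only [Finset.mem_range] at hk
      rw [ih k (by omega), ih (n - k) (by omega)]
noncomputable def Apoly (n : ℕ) : MvPolynomial (Fin 2) ℚ :=
  ∑ P ∈ dyckSet n, X 0 ^ statA P

noncomputable def Bpoly (n : ℕ) : MvPolynomial (Fin 2) ℚ :=
  ∑ P ∈ dyckSet n, X 1 ^ statB n P

lemma T_eq (n : ℕ) :
    T n = ∑ P ∈ dyckSet n, (X 0 : MvPolynomial (Fin 2) ℚ) ^ statA P * X 1 ^ statB n P := rfl

lemma statB_zero (P : Finset ℕ) : statB 0 P = 0 := by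
  simp [statB]

lemma Apoly_zero : Apoly 0 = 1 := by
  simp [Apoly, dyckSet_zero, statA_empty]

lemma Bpoly_zero : Bpoly 0 = 1 := by
  simp [Bpoly, dyckSet_zero, statB_zero]

lemma T_zero : T 0 = 1 := by
  simp [T_eq, dyckSet_zero, statA_empty, statB_zero]

lemma Apoly_succ (n : ℕ) :
    Apoly (n+1) = X 0 * ∑ k ∈ Finset.range (n+1),
      Apoly k * ((catalan (n-k) : ℕ) : MvPolynomial (Fin 2) ℚ) := by
  rw [Apoly, sum_dyck_succ n (fun P => (X 0 : MvPolynomial (Fin 2) ℚ) ^ statA P),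
    Finset.mul_sum]
  refine Finset.sum_congr rfl fun k hk => ?_
  calc ∑ P' ∈ dyckSet k, ∑ Q ∈ dyckSet (n-k),
        (X 0 : MvPolynomial (Fin 2) ℚ) ^ statA (glueP k P' Q)
      = ∑ P' ∈ dyckSet k, ∑ _Q ∈ dyckSet (n-k),
          X 0 * (X 0 : MvPolynomial (Fin 2) ℚ) ^ statA P' := by
        refine Finset.sum_congr rfl fun P' hP' => Finset.sum_congr rfl fun Q hQ => ?_
        rw [statA_glue (mem_dyckSet.mp hP') (mem_dyckSet.mp hQ), pow_succ]
        ring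
    _ = ∑ P' ∈ dyckSet k,
          ((catalan (n-k) : ℕ) : MvPolynomial (Fin 2) ℚ)
            * (X 0 * (X 0 : MvPolynomial (Fin 2) ℚ) ^ statA P') := by
        refine Finset.sum_congr rfl fun P' _ => ?_
        rw [Finset.sum_const, card_dyckSet, nsmul_eq_mul]
    _ = X 0 * (Apoly k * ((catalan (n-k) : ℕ) : MvPolynomial (Fin 2) ℚ)) := by
        rw [Apoly, Finset.sum_mul, Finset.mul_sum]
        refine Finset.sum_congr rfl fun P' _ => ?_
        ring

lemma Bpoly_succ (n : ℕ) :
    Bpoly (n+1) = X 1 * ∑ k ∈ Finset.range (n+1),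
      ((catalan k : ℕ) : MvPolynomial (Fin 2) ℚ) * Bpoly (n-k) := by
  rw [Bpoly, sum_dyck_succ n (fun P => (X 1 : MvPolynomial (Fin 2) ℚ) ^ statB (n+1) P),
    Finset.mul_sum]
  refine Finset.sum_congr rfl fun k hk => ?_
  calc ∑ P' ∈ dyckSet k, ∑ Q ∈ dyckSet (n-k),
        (X 1 : MvPolynomial (Fin 2) ℚ) ^ statB (n+1) (glueP k P' Q)
      = ∑ _P' ∈ dyckSet k, ∑ Q ∈ dyckSet (n-k),
          X 1 * (X 1 : MvPolynomial (Fin 2) ℚ) ^ statB (n-k) Q := by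
        refine Finset.sum_congr rfl fun P' hP' => Finset.sum_congr rfl fun Q hQ => ?_
        have hb := statB_glue (mem_dyckSet.mp hP') (mem_dyckSet.mp hQ)
        rw [show k + (n-k) + 1 = n + 1 from by
          simp only [Finset.mem_range] at hk; omega] at hb
        rw [hb, pow_succ]
        ring
    _ = ((catalan k : ℕ) : MvPolynomial (Fin 2) ℚ)
          * ∑ Q ∈ dyckSet (n-k), X 1 * (X 1 : MvPolynomial (Fin 2) ℚ) ^ statB (n-k) Q := by
        rw [Finset.sum_const, card_dyckSet, nsmul_eq_mul]
    _ = X 1 * (((catalan k : ℕ) : MvPolynomial (Fin 2) ℚ) * Bpoly (n-k)) := by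
        rw [Bpoly, Finset.mul_sum, Finset.mul_sum, Finset.mul_sum]
        exact Finset.sum_congr rfl fun Q _ => by ring

lemma T_succ (n : ℕ) :
    T (n+1) = X 0 * X 1 * ∑ k ∈ Finset.range (n+1), Apoly k * Bpoly (n-k) := by
  rw [T_eq, sum_dyck_succ n
    (fun P => (X 0 : MvPolynomial (Fin 2) ℚ) ^ statA P * X 1 ^ statB (n+1) P),
    Finset.mul_sum]
  refine Finset.sum_congr rfl fun k hk => ?_
  calc ∑ P' ∈ dyckSet k, ∑ Q ∈ dyckSet (n-k),
        (X 0 : MvPolynomial (Fin 2) ℚ) ^ statA (glueP k P' Q) * X 1 ^ statB (n+1) (glueP k P' Q)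
      = ∑ P' ∈ dyckSet k, ∑ Q ∈ dyckSet (n-k),
          (X 0 * X 1) * ((X 0 : MvPolynomial (Fin 2) ℚ) ^ statA P' * X 1 ^ statB (n-k) Q) := by
        refine Finset.sum_congr rfl fun P' hP' => Finset.sum_congr rfl fun Q hQ => ?_
        have hb := statB_glue (mem_dyckSet.mp hP') (mem_dyckSet.mp hQ)
        rw [show k + (n-k) + 1 = n + 1 from by
          simp only [Finset.mem_range] at hk; omega] at hb
        rw [hb, statA_glue (mem_dyckSet.mp hP') (mem_dyckSet.mp hQ), pow_succ, pow_succ]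
        ring
    _ = X 0 * X 1 * (Apoly k * Bpoly (n-k)) := by
        rw [Apoly, Bpoly, Finset.sum_mul_sum]
        rw [Finset.mul_sum]
        exact Finset.sum_congr rfl fun P' _ => (Finset.mul_sum _ _ _).symm
noncomputable def AS : PowerSeries (MvPolynomial (Fin 2) ℚ) := PowerSeries.mk Apoly
noncomputable def BS : PowerSeries (MvPolynomial (Fin 2) ℚ) := PowerSeries.mk Bpoly

lemma coeff_catalanGF (n : ℕ) :
    (PowerSeries.coeff n) catalanGF = ((catalan n : ℕ) : MvPolynomial (Fin 2) ℚ) := by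
  rw [catalanGF, PowerSeries.coeff_mk]
  have h2 : (n+1) * catalan n = (2*n).choose n := succ_mul_catalan_eq_centralBinom n
  have h4 : (((2*n).choose n : ℕ) : ℚ) = ((n : ℚ)+1) * ((catalan n : ℕ) : ℚ) := by
    exact_mod_cast congrArg (fun z : ℕ => (z : ℚ)) h2.symm
  have h3 : ((2*n).choose n : ℚ) / ((n : ℚ)+1) = ((catalan n : ℕ) : ℚ) := by
    rw [h4]
    field_simp
  rw [h3, map_natCast]

lemma catalanGF_eq :
    catalanGF = 1 + PowerSeries.X * (catalanGF * catalanGF) := by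
  refine PowerSeries.ext fun n => ?_
  rcases n with _ | n
  · simp only [map_add, PowerSeries.coeff_zero_eq_constantCoeff]
    have : PowerSeries.constantCoeff catalanGF = ((catalan 0 : ℕ) : MvPolynomial (Fin 2) ℚ) := by
      rw [← PowerSeries.coeff_zero_eq_constantCoeff]; exact coeff_catalanGF 0
    simp [this]
  · rw [map_add, PowerSeries.coeff_succ_X_mul, PowerSeries.coeff_mul, coeff_catalanGF,
      PowerSeries.coeff_one, if_neg (Nat.succ_ne_zero n), catalan_succ']
    rw [zero_add, Nat.cast_sum]
    refine Finset.sum_congr rfl fun ij hij => ?_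
    rw [coeff_catalanGF, coeff_catalanGF, Nat.cast_mul]

lemma AS_eq :
    AS = 1 + PowerSeries.C (R := MvPolynomial (Fin 2) ℚ) (X 0)
      * (PowerSeries.X * (AS * catalanGF)) := by
  refine PowerSeries.ext fun n => ?_
  rcases n with _ | n
  · rw [map_add, PowerSeries.coeff_C_mul, PowerSeries.coeff_zero_X_mul, AS,
      PowerSeries.coeff_mk, Apoly_zero]
    simp
  · rw [map_add, PowerSeries.coeff_C_mul, PowerSeries.coeff_succ_X_mul, PowerSeries.coeff_mul,
      PowerSeries.coeff_one, if_neg (Nat.succ_ne_zero n), zero_add]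
    rw [AS, PowerSeries.coeff_mk, Apoly_succ,
      Finset.Nat.sum_antidiagonal_eq_sum_range_succ_mk]
    refine congrArg (HMul.hMul _) ?_
    refine Finset.sum_congr rfl fun k hk => ?_
    rw [PowerSeries.coeff_mk, coeff_catalanGF]

lemma BS_eq :
    BS = 1 + PowerSeries.C (R := MvPolynomial (Fin 2) ℚ) (X 1)
      * (PowerSeries.X * (catalanGF * BS)) := by
  refine PowerSeries.ext fun n => ?_
  rcases n with _ | n
  · rw [map_add, PowerSeries.coeff_C_mul, PowerSeries.coeff_zero_X_mul, BS,
      PowerSeries.coeff_mk, Bpoly_zero]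
    simp
  · rw [map_add, PowerSeries.coeff_C_mul, PowerSeries.coeff_succ_X_mul, PowerSeries.coeff_mul,
      PowerSeries.coeff_one, if_neg (Nat.succ_ne_zero n), zero_add]
    rw [BS, PowerSeries.coeff_mk, Bpoly_succ,
      Finset.Nat.sum_antidiagonal_eq_sum_range_succ_mk]
    refine congrArg (HMul.hMul _) ?_
    refine Finset.sum_congr rfl fun k hk => ?_
    rw [PowerSeries.coeff_mk, coeff_catalanGF]

lemma T_ps_eq :
    PowerSeries.mk T = 1 + (PowerSeries.C (R := MvPolynomial (Fin 2) ℚ) (X 0)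
        * PowerSeries.C (R := MvPolynomial (Fin 2) ℚ) (X 1))
      * (PowerSeries.X * (AS * BS)) := by
  rw [← map_mul]
  refine PowerSeries.ext fun n => ?_
  rcases n with _ | n
  · rw [map_add, PowerSeries.coeff_C_mul, PowerSeries.coeff_zero_X_mul,
      PowerSeries.coeff_mk, T_zero]
    simp
  · rw [map_add, PowerSeries.coeff_C_mul, PowerSeries.coeff_succ_X_mul, PowerSeries.coeff_mul,
      PowerSeries.coeff_one, if_neg (Nat.succ_ne_zero n), zero_add]
    rw [PowerSeries.coeff_mk, T_succ,
      Finset.Nat.sum_antidiagonal_eq_sum_range_succ_mk]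
    refine congrArg (HMul.hMul _) ?_
    refine Finset.sum_congr rfl fun k hk => ?_
    rw [AS, BS, PowerSeries.coeff_mk, PowerSeries.coeff_mk]

theorem catalan_tutte_gf' :
    (1 - PowerSeries.C (R := MvPolynomial (Fin 2) ℚ) (X 0 * X 1) * PowerSeries.X +
        PowerSeries.C (R := MvPolynomial (Fin 2) ℚ) (X 0 * X 1 - X 0 - X 1) * PowerSeries.X *
          catalanGF) * PowerSeries.mk T =
      1 + PowerSeries.C (R := MvPolynomial (Fin 2) ℚ) (X 0 * X 1 - X 0 - X 1) * PowerSeries.X *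
        catalanGF := by
  set a := PowerSeries.C (R := MvPolynomial (Fin 2) ℚ) (X 0) with ha
  set b := PowerSeries.C (R := MvPolynomial (Fin 2) ℚ) (X 1) with hb
  set c := catalanGF with hc
  set Xp := (PowerSeries.X : PowerSeries (MvPolynomial (Fin 2) ℚ)) with hX
  have e1 : PowerSeries.C (R := MvPolynomial (Fin 2) ℚ) (X 0 * X 1) = a * b := by
    rw [map_mul]
  have e2 : PowerSeries.C (R := MvPolynomial (Fin 2) ℚ) (X 0 * X 1 - X 0 - X 1)
      = a * b - a - b := by
    rw [map_sub, map_sub, map_mul]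
  rw [e1, e2]
  have h1 : Xp * c * (Xp * c) = Xp * c - Xp := by
    linear_combination (-Xp) * catalanGF_eq
  have hA : (1 - a * (Xp * c)) * AS = 1 := by
    linear_combination AS_eq
  have hB : (1 - b * (Xp * c)) * BS = 1 := by
    linear_combination BS_eq
  have hT : PowerSeries.mk T = 1 + a * b * (Xp * (AS * BS)) := T_ps_eq
  have hABl : (1 - a * (Xp * c)) * (1 - b * (Xp * c)) * (AS * BS) = 1 := by
    linear_combination ((1 - b * (Xp * c)) * BS) * hA + hB
  have hL : 1 - a * b * Xp + (a * b - a - b) * Xp * c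
      = (1 - a * (Xp * c)) * (1 - b * (Xp * c)) := by
    linear_combination (-(a * b)) * h1
  linear_combination (1 - a * b * Xp + (a * b - a - b) * Xp * c) * hT
    + (a * b * Xp) * hABl + (a * b * Xp * (AS * BS)) * hL

/-- The generating function identity
`(1 − qt·x + (qt − q − t)·x·C(x)) · Σ_{n≥0} T_n(q,t) x^n = 1 + (qt − q − t)·x·C(x)`
for the Tutte polynomials of the Catalan matroids, as formal power series in `x`
with coefficients in `ℚ[q,t]`. -/
theorem catalan_tutte_gf :
    (1 - PowerSeries.C (R := MvPolynomial (Fin 2) ℚ) (X 0 * X 1) * PowerSeries.X +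
        PowerSeries.C (R := MvPolynomial (Fin 2) ℚ) (X 0 * X 1 - X 0 - X 1) * PowerSeries.X *
          catalanGF) * PowerSeries.mk T =
      1 + PowerSeries.C (R := MvPolynomial (Fin 2) ℚ) (X 0 * X 1 - X 0 - X 1) * PowerSeries.X *
        catalanGF :=
  catalan_tutte_gf'
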